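/- arXiv:2404.04553 — 3 statements merged into one kernel-verified Lean document; each statement's English description precedes it below -/
import Mathlib

section
/- Let A = A0 + A1ε ∈ DQ^{n×k}, B = B0 + B1ε ∈ DQ^{l×m}, C = C0 + C1ε ∈ DQ^{n×m}. Set A11 = A1·L_{A0}, A2 = R_{A0}·A11, A3 = R_{A0}, C3 = −R_{A0}·C0, B2 = R_{B0}·B1, A4 = R_{A2}·R_{A0}, A5 = −A4·A1·A0†, C4 = A4·(A1·A0†·C0 + C0·B0†·B1 − C1), A6 = R_{A4}·A5, C5 = R_{A4}·C4, B3 = B2·L_{B0}, B4 = C4·L_{B0}. Suppose X = X0 + X1ε ∈ DQ^{k×m} and Y = Y0 + Y1ε ∈ DQ^{n×l} satisfy AX − YB = C. Then there exist quaternion matrices W1, ..., W8 of appropriate sizes such that, with U1 = A6†·C5·B0† + L_{A6}·W5 + W6·R_{B0}, U2 = A4†·B4·B3† + L_{A4}·W7 + W8·R_{B3}, and W = A2†·A3·[C1 + Y0·B1 + Y1·B0 − A1·A0†·(C0 + Y0·B0)] + L_{A2}·W2, one has Y0 = A3†·C3·B0† + L_{A3}·U1 + U2·R_{B0}, Y1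 = A4†·(C4 − A5·U1·B0 − A4·U2·B2)·B0† + L_{A4}·W3 + W4·R_{B0}, X0 = A0†·(C0 + Y0·B0) + L_{A0}·W, and X1 = A0†·[C1 + Y0·B1 + Y1·B0 − A1·A0†·(C0 + Y0·B0) − A11·W] + L_{A0}·W1. -/
open Matrix

/-- Quaternion matrices of size `p × q`. -/
abbrev QM (p q : ℕ) := Matrix (Fin p) (Fin q) (Quaternion ℝ)

/-- `Ad` is a Moore–Penrose inverse of the quaternion matrix `A`. -/
def IsMP {p q : ℕ} (A : QM p q) (Ad : QM q p) : Prop :=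
  A * Ad * A = A ∧ Ad * A * Ad = Ad ∧ (A * Ad)ᴴ = A * Ad ∧ (Ad * A)ᴴ = Ad * A

/-- The dual quaternion matrix `A0 + A1 ε`, realized as a matrix over the
dual numbers (dual quaternions) `DualNumber (Quaternion ℝ)`. -/
noncomputable def dm {p q : ℕ} (A0 A1 : QM p q) :
    Matrix (Fin p) (Fin q) (DualNumber (Quaternion ℝ)) :=
  A0.map TrivSqZeroExt.inl + A1.map TrivSqZeroExt.inr

/-- The rank of a quaternion matrix: the dimension (over `ℍ`) of the left
`ℍ`-submodule spanned by its rows. -/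
noncomputable def qrank {m n : Type*} (A : Matrix m n (Quaternion ℝ)) : ℕ :=
  Module.finrank (Quaternion ℝ)
    (Submodule.span (Quaternion ℝ) (Set.range (fun i : m => fun j : n => A i j)))

/-! Splitting `A X - Y B = C` into standard and infinitesimal parts gives `A0 X0 = C0 + Y0 B0`
and `A0 X1 + A1 X0 = C1 + Y0 B1 + Y1 B0`. Multiplying by `R_{A0}`, then `R_{A2}`, then `R_{A4}`
on the left and by `L_{B0}` on the right eliminates `X1`, `X0` and `Y1` in turn (each projector
kills its matrix because `A A† A = A`), leaving the two-sided equations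
`A3 Y0 B0 = C3`, `A4 Y1 B0 = C4 - A5 Y0 B0 - A4 Y0 B2`, `A6 Y0 B0 = C5` and `A4 Y0 B3 = B4`.
A solution `Z` of `A Z B = C` equals `A† C B† + L_A (Z B B†) + Z R_B` for any `A†`, `B†`,
so all parameters can be read off the solution itself: `U1 = Y0 B0 B0†`, `U2 = Y0`, `W = X0`. -/

namespace Matrix

variable {R : Type*} [Ring R] {l m n o : Type*}

theorem eq_mul_add_of_mul_eq [Fintype m] [Fintype n] [DecidableEq n] {A : Matrix m n R}
    (Ad : Matrix n m R) {Z : Matrix n o R} {D : Matrix m o R} (h : A * Z = D) :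
    Z = Ad * D + (1 - Ad * A) * Z := by
  rw [← h, Matrix.sub_mul, Matrix.one_mul, Matrix.mul_assoc]
  abel

theorem eq_mul_mul_add_add_of_mul_mul_eq [Fintype l] [Fintype m] [Fintype n] [Fintype o]
    [DecidableEq n] [DecidableEq o] {A : Matrix m n R} (Ad : Matrix n m R)
    {B : Matrix o l R} (Bd : Matrix l o R) {Z : Matrix n o R} {C : Matrix m l R}
    (h : A * Z * B = C) :
    Z = Ad * C * Bd + (1 - Ad * A) * (Z * B * Bd) + Z * (1 - B * Bd) := by
  rw [← h]
  simp only [Matrix.sub_mul, Matrix.mul_sub, Matrix.one_mul, Matrix.mul_one, Matrix.mul_assoc]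
  abel

theorem mul_eq_sub_sub_of_mul_add_mul_eq [Fintype m] [Fintype n] [DecidableEq n]
    {A0 A1 : Matrix m n R} (A0d : Matrix n m R) {X0 X1 : Matrix n o R} {D0 D1 : Matrix m o R}
    (h0 : A0 * X0 = D0) (h1 : A0 * X1 + A1 * X0 = D1) :
    A0 * X1 = D1 - A1 * A0d * D0 - A1 * (1 - A0d * A0) * X0 := by
  rw [← h1, ← h0]
  simp only [Matrix.mul_sub, Matrix.sub_mul, Matrix.mul_one, Matrix.mul_assoc]
  abel

theorem one_sub_mul_mul_eq_zero_of_mul_eq [Fintype m] [Fintype n] [DecidableEq m]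
    {A : Matrix m n R} {Ad : Matrix n m R} (hA : A * Ad * A = A) {X : Matrix n o R}
    {D : Matrix m o R} (h : A * X = D) : (1 - A * Ad) * D = 0 := by
  rw [← h, ← Matrix.mul_assoc, Matrix.sub_mul, Matrix.one_mul, hA, sub_self, Matrix.zero_mul]

theorem mul_one_sub_mul_eq_zero_of_mul_eq [Fintype m] [Fintype n] [DecidableEq n]
    {B : Matrix m n R} {Bd : Matrix n m R} (hB : B * Bd * B = B) {Y : Matrix o m R}
    {D : Matrix o n R} (h : Y * B = D) : D * (1 - Bd * B) = 0 := by
  rw [← h, Matrix.mul_assoc, Matrix.mul_sub, Matrix.mul_one, ← Matrix.mul_assoc, hB, sub_self,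
    Matrix.mul_zero]

end Matrix

theorem dm_mul {p q r : ℕ} (A0 A1 : QM p q) (X0 X1 : QM q r) :
    dm A0 A1 * dm X0 X1 = dm (A0 * X0) (A0 * X1 + A1 * X0) := by
  ext i j : 2
  · simp [dm, Matrix.mul_apply, TrivSqZeroExt.fst_sum]
  · simp [dm, Matrix.mul_apply, TrivSqZeroExt.snd_sum, Finset.sum_add_distrib]

theorem dm_sub {p q : ℕ} (A0 A1 B0 B1 : QM p q) :
    dm A0 A1 - dm B0 B1 = dm (A0 - B0) (A1 - B1) := by
  ext i j : 2 <;> simp [dm]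

theorem dm_inj {p q : ℕ} {A0 A1 B0 B1 : QM p q} :
    dm A0 A1 = dm B0 B1 ↔ A0 = B0 ∧ A1 = B1 := by
  refine ⟨fun h => ⟨?_, ?_⟩, fun h => h.1 ▸ h.2 ▸ rfl⟩ <;> ext i j : 1
  · simpa [dm] using congrArg TrivSqZeroExt.fst (congrFun (congrFun h i) j)
  · simpa [dm] using congrArg TrivSqZeroExt.snd (congrFun (congrFun h i) j)

theorem dm_mul_sub_dm_mul_eq_dm_iff {n k l m : ℕ} {A0 A1 : QM n k} {X0 X1 : QM k m}
    {Y0 Y1 : QM n l} {B0 B1 : QM l m} {C0 C1 : QM n m} :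
    dm A0 A1 * dm X0 X1 - dm Y0 Y1 * dm B0 B1 = dm C0 C1 ↔
      A0 * X0 = C0 + Y0 * B0 ∧ A0 * X1 + A1 * X0 = C1 + Y0 * B1 + Y1 * B0 := by
  rw [dm_mul, dm_mul, dm_sub, dm_inj, sub_eq_iff_eq_add, sub_eq_iff_eq_add, ← add_assoc]

namespace DualSylvester

variable {n k l m : ℕ} {A0 A1 : QM n k} {A0d : QM k n} {B0 B1 : QM l m} {B0d : QM m l}
  {C0 C1 C4 : QM n m} {X0 X1 : QM k m} {Y0 Y1 : QM n l} {A3 A4 A5 : QM n n} {B2 : QM l m}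

theorem y0_equation {C3 : QM n m} (hA0d : A0 * A0d * A0 = A0) (hX0 : A0 * X0 = C0 + Y0 * B0)
    (hA3 : A3 = 1 - A0 * A0d) (hC3 : C3 = -((1 - A0 * A0d) * C0)) :
    A3 * Y0 * B0 = C3 := by
  have h := one_sub_mul_mul_eq_zero_of_mul_eq hA0d hX0
  rw [hA3, hC3, Matrix.mul_assoc]
  exact eq_neg_of_add_eq_zero_right ((Matrix.mul_add _ _ _).symm.trans h)

theorem w_equation {A11 A2 : QM n k} {D : QM n m} (hA0d : A0 * A0d * A0 = A0)
    (hX1 : A0 * X1 = D - A11 * X0) (hA2 : A2 = (1 - A0 * A0d) * A11)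
    (hA3 : A3 = 1 - A0 * A0d) :
    A2 * X0 = A3 * D := by
  have h := one_sub_mul_mul_eq_zero_of_mul_eq hA0d hX1
  rwa [Matrix.mul_sub, sub_eq_zero, ← Matrix.mul_assoc, ← hA2, ← hA3, eq_comm] at h

theorem y1_equation
    (hE : A4 * (C1 + Y0 * B1 + Y1 * B0 - A1 * A0d * (C0 + Y0 * B0)) = 0)
    (hC : A4 * (C0 + Y0 * B0) = 0)
    (hB2 : B2 = (1 - B0 * B0d) * B1) (hA5 : A5 = -(A4 * A1 * A0d))
    (hC4 : C4 = A4 * (A1 * A0d * C0 + C0 * B0d * B1 - C1)) :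
    A4 * Y1 * B0 = C4 - A5 * Y0 * B0 - A4 * Y0 * B2 :=
  calc A4 * Y1 * B0
      = A4 * Y1 * B0 + A4 * (C0 + Y0 * B0) * (B0d * B1)
          - A4 * (C1 + Y0 * B1 + Y1 * B0 - A1 * A0d * (C0 + Y0 * B0)) := by
        rw [hC, hE, Matrix.zero_mul, add_zero, sub_zero]
    _ = C4 - A5 * Y0 * B0 - A4 * Y0 * B2 := by
        rw [hC4, hA5, hB2]
        simp only [Matrix.mul_add, Matrix.mul_sub, Matrix.add_mul, Matrix.sub_mul,
          Matrix.one_mul, Matrix.neg_mul, Matrix.mul_assoc]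
        abel

theorem u1_equation {A4d A6 : QM n n} {C5 : QM n m} (hA4 : A4 * A4d * A4 = A4)
    (hY1 : A4 * Y1 * B0 = C4 - A5 * Y0 * B0 - A4 * Y0 * B2)
    (hA6 : A6 = (1 - A4 * A4d) * A5) (hC5 : C5 = (1 - A4 * A4d) * C4) :
    A6 * Y0 * B0 = C5 := by
  have h := one_sub_mul_mul_eq_zero_of_mul_eq hA4 ((Matrix.mul_assoc A4 Y1 B0).symm.trans hY1)
  rw [Matrix.mul_sub, Matrix.mul_sub,
    one_sub_mul_mul_eq_zero_of_mul_eq hA4 (Matrix.mul_assoc A4 Y0 B2).symm, sub_zero,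
    sub_eq_zero, ← hC5] at h
  rw [h, hA6]
  simp only [Matrix.mul_assoc]

theorem u2_equation {B3 : QM l m} {B4 : QM n m} (hB0 : B0 * B0d * B0 = B0)
    (hY1 : A4 * Y1 * B0 = C4 - A5 * Y0 * B0 - A4 * Y0 * B2)
    (hB3 : B3 = B2 * (1 - B0d * B0)) (hB4 : B4 = C4 * (1 - B0d * B0)) :
    A4 * Y0 * B3 = B4 := by
  have h := mul_one_sub_mul_eq_zero_of_mul_eq hB0 hY1
  rw [Matrix.sub_mul, Matrix.sub_mul, ← hB4,
    mul_one_sub_mul_eq_zero_of_mul_eq (Y := A5 * Y0) hB0 rfl, sub_zero, sub_eq_zero,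
    Matrix.mul_assoc (A4 * Y0), ← hB3] at h
  exact h.symm

end DualSylvester

theorem stmt6_general {n k l m : ℕ}
    (A0 A1 : QM n k) (B0 B1 : QM l m) (C0 C1 : QM n m)
    (A0d : QM k n) (hA0d : IsMP A0 A0d)
    (B0d : QM m l) (hB0d : IsMP B0 B0d)
    (A11 : QM n k) (hA11 : A11 = A1 * (1 - A0d * A0))
    (A2 : QM n k) (hA2 : A2 = (1 - A0 * A0d) * A11)
    (A2d : QM k n) (hA2d : IsMP A2 A2d)
    (A3 : QM n n) (hA3 : A3 = 1 - A0 * A0d)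
    (A3d : QM n n)
    (C3 : QM n m) (hC3 : C3 = -((1 - A0 * A0d) * C0))
    (B2 : QM l m) (hB2 : B2 = (1 - B0 * B0d) * B1)
    (A4 : QM n n) (hA4 : A4 = (1 - A2 * A2d) * (1 - A0 * A0d))
    (A4d : QM n n) (hA4d : IsMP A4 A4d)
    (A5 : QM n n) (hA5 : A5 = -(A4 * A1 * A0d))
    (C4 : QM n m) (hC4 : C4 = A4 * (A1 * A0d * C0 + C0 * B0d * B1 - C1))
    (A6 : QM n n) (hA6 : A6 = (1 - A4 * A4d) * A5)
    (A6d : QM n n)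
    (C5 : QM n m) (hC5 : C5 = (1 - A4 * A4d) * C4)
    (B3 : QM l m) (hB3 : B3 = B2 * (1 - B0d * B0))
    (B3d : QM m l)
    (B4 : QM n m) (hB4 : B4 = C4 * (1 - B0d * B0))
    (X0 X1 : QM k m) (Y0 Y1 : QM n l)
    (hsol : dm A0 A1 * dm X0 X1 - dm Y0 Y1 * dm B0 B1 = dm C0 C1) :
    ∃ (W1 W2 : QM k m) (W3 W4 W5 W6 W7 W8 : QM n l)
      (U1 U2 : QM n l) (W : QM k m),
      U1 = A6d * C5 * B0d + (1 - A6d * A6) * W5 + W6 * (1 - B0 * B0d) ∧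
      U2 = A4d * B4 * B3d + (1 - A4d * A4) * W7 + W8 * (1 - B3 * B3d) ∧
      W = A2d * A3 * (C1 + Y0 * B1 + Y1 * B0 - A1 * A0d * (C0 + Y0 * B0))
            + (1 - A2d * A2) * W2 ∧
      Y0 = A3d * C3 * B0d + (1 - A3d * A3) * U1 + U2 * (1 - B0 * B0d) ∧
      Y1 = A4d * (C4 - A5 * U1 * B0 - A4 * U2 * B2) * B0d
            + (1 - A4d * A4) * W3 + W4 * (1 - B0 * B0d) ∧
      X0 = A0d * (C0 + Y0 * B0) + (1 - A0d * A0) * W ∧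
      X1 = A0d * (C1 + Y0 * B1 + Y1 * B0 - A1 * A0d * (C0 + Y0 * B0) - A11 * W)
            + (1 - A0d * A0) * W1 := by
  obtain ⟨hA0d, -⟩ := hA0d
  obtain ⟨hB0d, -⟩ := hB0d
  obtain ⟨hA2d, -⟩ := hA2d
  obtain ⟨hA4d, -⟩ := hA4d
  obtain ⟨hX0, hX1⟩ := dm_mul_sub_dm_mul_eq_dm_iff.1 hsol
  replace hX1 := hA11 ▸ mul_eq_sub_sub_of_mul_add_mul_eq A0d hX0 hX1
  have hW := DualSylvester.w_equation hA0d hX1 hA2 hA3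
  have hY1 := DualSylvester.y1_equation
    (by rw [hA4, ← hA3, Matrix.mul_assoc]; exact one_sub_mul_mul_eq_zero_of_mul_eq hA2d hW)
    (by rw [hA4, Matrix.mul_assoc, one_sub_mul_mul_eq_zero_of_mul_eq hA0d hX0, Matrix.mul_zero])
    hB2 hA5 hC4
  have hB0B0 : Y0 * B0 * B0d * B0 = Y0 * B0 := by
    rw [Matrix.mul_assoc Y0 B0 B0d, Matrix.mul_assoc Y0, hB0d]
  have hU1 : A6 * (Y0 * B0 * B0d) * B0 = C5 := by
    rw [Matrix.mul_assoc A6, hB0B0, ← Matrix.mul_assoc]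
    exact DualSylvester.u1_equation hA4d hY1 hA6 hC5
  refine ⟨X1, X0, Y1 * B0 * B0d, Y1, Y0 * B0 * B0d * B0 * B0d, Y0 * B0 * B0d,
    Y0 * B3 * B3d, Y0, Y0 * B0 * B0d, Y0, X0,
    eq_mul_mul_add_add_of_mul_mul_eq A6d B0d hU1,
    eq_mul_mul_add_add_of_mul_mul_eq A4d B3d (DualSylvester.u2_equation hB0d hY1 hB3 hB4),
    by rw [Matrix.mul_assoc A2d A3]; exact eq_mul_add_of_mul_eq A2d hW,
    eq_mul_mul_add_add_of_mul_mul_eq A3d B0d (DualSylvester.y0_equation hA0d hX0 hA3 hC3),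
    eq_mul_mul_add_add_of_mul_mul_eq A4d B0d ?_,
    eq_mul_add_of_mul_eq A0d hX0,
    eq_mul_add_of_mul_eq A0d hX1⟩
  rwa [Matrix.mul_assoc A5, hB0B0, ← Matrix.mul_assoc A5]

/-- every solution of `A X - Y B = C` is of the displayed form. -/
theorem stmt6 {n k l m : ℕ}
    (A0 A1 : QM n k) (B0 B1 : QM l m) (C0 C1 : QM n m)
    (A0d : QM k n) (hA0d : IsMP A0 A0d)
    (B0d : QM m l) (hB0d : IsMP B0 B0d)
    (A11 : QM n k) (hA11 : A11 = A1 * (1 - A0d * A0))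
    (A2 : QM n k) (hA2 : A2 = (1 - A0 * A0d) * A11)
    (A2d : QM k n) (hA2d : IsMP A2 A2d)
    (A3 : QM n n) (hA3 : A3 = 1 - A0 * A0d)
    (A3d : QM n n) (hA3d : IsMP A3 A3d)
    (C3 : QM n m) (hC3 : C3 = -((1 - A0 * A0d) * C0))
    (B2 : QM l m) (hB2 : B2 = (1 - B0 * B0d) * B1)
    (A4 : QM n n) (hA4 : A4 = (1 - A2 * A2d) * (1 - A0 * A0d))
    (A4d : QM n n) (hA4d : IsMP A4 A4d)
    (A5 : QM n n) (hA5 : A5 = -(A4 * A1 * A0d))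
    (C4 : QM n m) (hC4 : C4 = A4 * (A1 * A0d * C0 + C0 * B0d * B1 - C1))
    (A6 : QM n n) (hA6 : A6 = (1 - A4 * A4d) * A5)
    (A6d : QM n n) (hA6d : IsMP A6 A6d)
    (C5 : QM n m) (hC5 : C5 = (1 - A4 * A4d) * C4)
    (B3 : QM l m) (hB3 : B3 = B2 * (1 - B0d * B0))
    (B3d : QM m l) (hB3d : IsMP B3 B3d)
    (B4 : QM n m) (hB4 : B4 = C4 * (1 - B0d * B0))
    (X0 X1 : QM k m) (Y0 Y1 : QM n l)
    (hsol : dm A0 A1 * dm X0 X1 - dm Y0 Y1 * dm B0 B1 = dm C0 C1) :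
    ∃ (W1 W2 : QM k m) (W3 W4 W5 W6 W7 W8 : QM n l)
      (U1 U2 : QM n l) (W : QM k m),
      U1 = A6d * C5 * B0d + (1 - A6d * A6) * W5 + W6 * (1 - B0 * B0d) ∧
      U2 = A4d * B4 * B3d + (1 - A4d * A4) * W7 + W8 * (1 - B3 * B3d) ∧
      W = A2d * A3 * (C1 + Y0 * B1 + Y1 * B0 - A1 * A0d * (C0 + Y0 * B0))
            + (1 - A2d * A2) * W2 ∧
      Y0 = A3d * C3 * B0d + (1 - A3d * A3) * U1 + U2 * (1 - B0 * B0d) ∧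
      Y1 = A4d * (C4 - A5 * U1 * B0 - A4 * U2 * B2) * B0d
            + (1 - A4d * A4) * W3 + W4 * (1 - B0 * B0d) ∧
      X0 = A0d * (C0 + Y0 * B0) + (1 - A0d * A0) * W ∧
      X1 = A0d * (C1 + Y0 * B1 + Y1 * B0 - A1 * A0d * (C0 + Y0 * B0) - A11 * W)
            + (1 - A0d * A0) * W1 :=
  stmt6_general A0 A1 B0 B1 C0 C1 A0d hA0d B0d hB0d A11 hA11 A2 hA2 A2d hA2d A3 hA3 A3d C3 hC3 B2
    hB2 A4 hA4 A4d hA4d A5 hA5 C4 hC4 A6 hA6 A6d C5 hC5 B3 hB3 B3d B4 hB4 X0 X1 Y0 Y1 hsol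
end

section
/- Let A ∈ ℍ^{p×q}, M ∈ ℍ^{p×s}, F ∈ ℍ^{t×s}, N ∈ ℍ^{r×q}, K ∈ ℍ^{r×u} be quaternion matrices. Then r[A M·L_F; R_K·N 0] = r[A M 0; N 0 K; 0 F 0] − r(K) − r(F), where the displayed matrices are block matrices with the indicated blocks and zero blocks of compatible sizes. -/
/-!
Multiplying the bordered matrix `[A M 0; N 0 K; 0 F 0]` on the left by a unitriangular block
matrix subtracts `M F† · [0 F 0]` from its first block row, and multiplying on the right by one
subtracts `[0; K] · K† N` from its first block column. This changes neither its rank nor its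
border and turns the inner block into `C = [A, M L_F; R_K N, 0]`. In `[C, [0; K]; [0 F], 0]` the
idempotent `F†F` fixes the rows of `F` and annihilates the columns of `C` (as `L_F F†F = 0`), so
the rows through `F` span a complement; likewise `KK†` fixes `K` and annihilates `C` from the left
(as `KK† R_K = 0`), which separates the columns through `K`. Hence the rank is
`r(C) + r(K) + r(F)`.
-/

open Matrix

open Module

namespace Matrix

section Semiring

variable {R : Type*} [Semiring R] {l m n o : Type*} [Fintype l] [Fintype m]

/-- `v ↦ v ᵥ* A` is left-linear also over a noncommutative ring, so this is the left span of the
rows, as in `qrank`. -/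
abbrev rowSpace (A : Matrix m n R) : Submodule R (n → R) := LinearMap.range A.vecMulLinear

theorem vecMulLinear_mul (A : Matrix l m R) (B : Matrix m n R) :
    (A * B).vecMulLinear = B.vecMulLinear ∘ₗ A.vecMulLinear :=
  LinearMap.ext fun v => (vecMul_vecMul v A B).symm

theorem rowSpace_mul_le (P : Matrix l m R) (A : Matrix m n R) :
    (P * A).rowSpace ≤ A.rowSpace := by
  rw [rowSpace, vecMulLinear_mul]
  exact LinearMap.range_comp_le_range _ _

theorem rowSpace_mul_of_mul_eq_one [DecidableEq m] (P : Matrix l m R) (P' : Matrix m l R)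
    (hP : P' * P = 1) (A : Matrix m n R) : (P * A).rowSpace = A.rowSpace := by
  refine le_antisymm (rowSpace_mul_le P A) ?_
  simpa only [← Matrix.mul_assoc, hP, Matrix.one_mul] using rowSpace_mul_le P' (P * A)

theorem rowSpace_mul (A : Matrix l m R) (Q : Matrix m n R) :
    (A * Q).rowSpace = A.rowSpace.map Q.vecMulLinear := by
  rw [rowSpace, vecMulLinear_mul, LinearMap.range_comp]

theorem vecMul_injective_of_mul_eq_one [Fintype n] [DecidableEq m] {Q : Matrix m n R}
    {Q' : Matrix n m R} (h : Q * Q' = 1) : Function.Injective Q.vecMul :=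
  Function.LeftInverse.injective (g := Q'.vecMul) fun v => by
    simp only [vecMul_vecMul, h, vecMul_one]

theorem finrank_rowSpace_mul_of_mul_eq_one [Fintype n] [DecidableEq m] (A : Matrix l m R)
    (Q : Matrix m n R) (Q' : Matrix n m R) (h : Q * Q' = 1) :
    finrank R (A * Q).rowSpace = finrank R A.rowSpace := by
  rw [rowSpace_mul]
  exact (Submodule.equivMapOfInjective _ (vecMul_injective_of_mul_eq_one h) _).finrank_eq.symm

theorem rowSpace_fromRows (X : Matrix m n R) (Y : Matrix l n R) :
    (fromRows X Y).rowSpace = X.rowSpace ⊔ Y.rowSpace := by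
  simp only [rowSpace, range_vecMulLinear, ← Submodule.span_union]
  congr 1
  rw [← Set.Sum.elim_range]
  congr 1

theorem rowSpace_zero : (0 : Matrix m n R).rowSpace = ⊥ := by
  ext v
  simp [eq_comm]

theorem finrank_rowSpace_fromCols_zero_right [Fintype n] [Fintype o] [DecidableEq n]
    (X : Matrix m n R) :
    finrank R (fromCols X (0 : Matrix m o R)).rowSpace = finrank R X.rowSpace := by
  have h : fromCols X (0 : Matrix m o R) = X * fromCols (1 : Matrix n n R) (0 : Matrix n o R) := by
    simp [mul_fromCols]
  rw [h, finrank_rowSpace_mul_of_mul_eq_one X _ (fromRows 1 0) (by simp [fromCols_mul_fromRows])]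

theorem finrank_rowSpace_fromCols_zero_left [Fintype n] [Fintype o] [DecidableEq o]
    (K : Matrix m o R) :
    finrank R (fromCols (0 : Matrix m n R) K).rowSpace = finrank R K.rowSpace := by
  have h : fromCols (0 : Matrix m n R) K = K * fromCols (0 : Matrix o n R) (1 : Matrix o o R) := by
    simp [mul_fromCols]
  rw [h, finrank_rowSpace_mul_of_mul_eq_one K _ (fromRows 0 1) (by simp [fromCols_mul_fromRows])]

theorem finrank_rowSpace_fromRows_zero_left (K : Matrix l n R) :
    finrank R (fromRows (0 : Matrix m n R) K).rowSpace = finrank R K.rowSpace := by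
  rw [rowSpace_fromRows, rowSpace_zero, bot_sup_eq]

end Semiring

section Ring

variable {R : Type*} [Ring R] {l m n o : Type*} [Fintype m]

theorem rowSpace_fromCols_of_mul_eq [DecidableEq m] (X : Matrix m n R) (K : Matrix m l R)
    (E : Matrix m m R) (hK : E * K = K) (hX : E * X = 0) :
    (fromCols X K).rowSpace = (fromBlocks X 0 0 K).rowSpace := by
  have h₁ : fromBlocks X 0 0 K = fromRows (1 - E) E * fromCols X K := by
    rw [fromRows_mul_fromCols, Matrix.sub_mul, Matrix.sub_mul, hK, hX, Matrix.one_mul,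
      Matrix.one_mul, sub_zero, sub_self]
  have h₂ : fromCols X K = fromCols (1 : Matrix m m R) (1 : Matrix m m R) * fromBlocks X 0 0 K :=
    by simp [fromCols_mul_fromBlocks]
  exact le_antisymm (h₂ ▸ rowSpace_mul_le _ _) (h₁ ▸ rowSpace_mul_le _ _)

theorem finrank_rowSpace_fromBlocks_add_mul_add_mul [Fintype l] [Fintype n] [Fintype o]
    [DecidableEq m] [DecidableEq n] [DecidableEq l] [DecidableEq o]
    (B : Matrix m n R) (K : Matrix m l R) (F : Matrix o n R) (E : Matrix m o R) (G : Matrix l n R) :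
    finrank R (fromBlocks (B + E * F + K * G) K F 0).rowSpace =
      finrank R (fromBlocks B K F 0).rowSpace := by
  have hP : fromBlocks 1 (-E) (0 : Matrix o m R) 1 * fromBlocks 1 E 0 1 = 1 := by
    simp [fromBlocks_multiply, fromBlocks_one]
  have hQ : fromBlocks 1 (0 : Matrix n l R) G 1 * fromBlocks 1 0 (-G) 1 = 1 := by
    simp [fromBlocks_multiply, fromBlocks_one]
  have h : fromBlocks 1 E (0 : Matrix o m R) 1 * fromBlocks B K F 0 *
      fromBlocks 1 (0 : Matrix n l R) G 1 =
      fromBlocks (B + E * F + K * G) K F 0 := by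
    simp [fromBlocks_multiply]
  rw [← h, finrank_rowSpace_mul_of_mul_eq_one _ _ _ hQ, rowSpace_mul_of_mul_eq_one _ _ hP]

end Ring

section DivisionRing

variable {D : Type*} [DivisionRing D] {l m n o : Type*}
  [Fintype l] [Fintype m] [Fintype n] [Fintype o]

theorem finrank_rowSpace_fromRows_of_mul_eq (X : Matrix m n D) (F : Matrix l n D)
    (E : Matrix n n D) (hF : F * E = F) (hX : X * E = 0) :
    finrank D (fromRows X F).rowSpace = finrank D X.rowSpace + finrank D F.rowSpace := by
  have hdisj : X.rowSpace ⊓ F.rowSpace = ⊥ := by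
    refine eq_bot_iff.mpr fun v hv => ?_
    obtain ⟨⟨w, hw⟩, ⟨w', hw'⟩⟩ := Submodule.mem_inf.mp hv
    simp only [vecMulLinear_apply] at hw hw'
    calc v = w' ᵥ* (F * E) := by rw [hF, hw']
      _ = w ᵥ* (X * E) := by rw [← vecMul_vecMul, ← vecMul_vecMul, hw, hw']
      _ = 0 := by rw [hX, vecMul_zero]
  have := Submodule.finrank_sup_add_finrank_inf_eq X.rowSpace F.rowSpace
  rw [hdisj, finrank_bot, add_zero] at this
  rw [rowSpace_fromRows, this]

theorem finrank_rowSpace_fromBlocks_zero_zero (X : Matrix m n D) (K : Matrix l o D) :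
    finrank D (fromBlocks X 0 0 K).rowSpace = finrank D X.rowSpace + finrank D K.rowSpace := by
  classical
  rw [← fromRows_fromCols_eq_fromBlocks,
    finrank_rowSpace_fromRows_of_mul_eq _ _ (fromBlocks 0 0 0 1) (by simp [fromCols_mul_fromBlocks])
      (by simp [fromCols_mul_fromBlocks]),
    finrank_rowSpace_fromCols_zero_right, finrank_rowSpace_fromCols_zero_left]

theorem finrank_rowSpace_fromCols_of_mul_eq [DecidableEq m] (X : Matrix m n D) (K : Matrix m l D)
    (E : Matrix m m D) (hK : E * K = K) (hX : E * X = 0) :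
    finrank D (fromCols X K).rowSpace = finrank D X.rowSpace + finrank D K.rowSpace := by
  rw [rowSpace_fromCols_of_mul_eq X K E hK hX, finrank_rowSpace_fromBlocks_zero_zero]

theorem finrank_rowSpace_fromBlocks_of_mul_eq [DecidableEq m] [DecidableEq n] (C : Matrix m n D)
    (K : Matrix m l D) (F : Matrix o n D) (E : Matrix m m D) (E' : Matrix n n D)
    (hK : E * K = K) (hCK : E * C = 0) (hF : F * E' = F) (hCF : C * E' = 0) :
    finrank D (fromBlocks C K F 0).rowSpace =
      finrank D C.rowSpace + finrank D K.rowSpace + finrank D F.rowSpace := by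
  rw [← fromRows_fromCols_eq_fromBlocks,
    finrank_rowSpace_fromRows_of_mul_eq _ _ (fromBlocks E' 0 0 0)
      (by simp [fromCols_mul_fromBlocks, hF]) (by simp [fromCols_mul_fromBlocks, hCF]),
    finrank_rowSpace_fromCols_of_mul_eq C K E hK hCK, finrank_rowSpace_fromCols_zero_right]

end DivisionRing

end Matrix

theorem qrank_eq_finrank_rowSpace {m n : Type*} [Fintype m] (A : Matrix m n (Quaternion ℝ)) :
    qrank A = finrank (Quaternion ℝ) A.rowSpace := by
  rw [rowSpace, range_vecMulLinear]
  rfl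

theorem finrank_rowSpace_fromBlocks_fromRows_zero_fromCols_zero {D : Type*} [DivisionRing D]
    {p q s t r u : Type*} [Fintype p] [Fintype q] [Fintype s] [Fintype t] [Fintype r] [Fintype u]
    [DecidableEq p] [DecidableEq q] [DecidableEq s] [DecidableEq r]
    (A : Matrix p q D) (M : Matrix p s D) (F : Matrix t s D) (N : Matrix r q D) (K : Matrix r u D)
    (Fd : Matrix s t D) (Kd : Matrix u r D) (hF : F * Fd * F = F) (hK : K * Kd * K = K) :
    finrank D (fromBlocks (fromBlocks A (M * (1 - Fd * F)) ((1 - K * Kd) * N) 0)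
        (fromRows (0 : Matrix p u D) K) (fromCols (0 : Matrix t q D) F) 0).rowSpace =
      finrank D (fromBlocks A (M * (1 - Fd * F)) ((1 - K * Kd) * N) 0).rowSpace +
        finrank D K.rowSpace + finrank D F.rowSpace := by
  have hFi : IsIdempotentElem (Fd * F) := by
    rw [IsIdempotentElem, Matrix.mul_assoc, ← Matrix.mul_assoc F, hF]
  have hKi : IsIdempotentElem (K * Kd) := by
    rw [IsIdempotentElem, ← Matrix.mul_assoc, hK]
  rw [finrank_rowSpace_fromBlocks_of_mul_eq _ _ _ (fromBlocks 0 0 0 (K * Kd))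
      (fromBlocks 0 0 0 (Fd * F)) ?_ ?_ ?_ ?_,
    finrank_rowSpace_fromRows_zero_left, finrank_rowSpace_fromCols_zero_left]
  · simp [fromBlocks_mul_fromRows, hK]
  · simp [fromBlocks_multiply, ← Matrix.mul_assoc, hKi.mul_one_sub_self]
  · simp [fromCols_mul_fromBlocks, ← Matrix.mul_assoc, hF]
  · simp [fromBlocks_multiply, Matrix.mul_assoc, hFi.one_sub_mul_self]

/-- the rank identity
`r [A, M L_F; R_K N, 0] = r [A M 0; N 0 K; 0 F 0] - r K - r F`. -/
theorem stmt13 {p q s t r u : ℕ}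
    (A : QM p q) (M : QM p s) (F : QM t s) (N : QM r q) (K : QM r u)
    (Fd : QM s t) (hFd : IsMP F Fd)
    (Kd : QM u r) (hKd : IsMP K Kd) :
    (qrank (fromBlocks A (M * (1 - Fd * F)) ((1 - K * Kd) * N) 0) : ℤ) =
      (qrank (fromBlocks
          (fromBlocks A M N 0)
          (fromRows (0 : QM p u) K)
          (fromCols (0 : QM t q) F) 0) : ℤ)
        - (qrank K : ℤ) - (qrank F : ℤ) := by
  obtain ⟨hF, -, -, -⟩ := hFd
  obtain ⟨hK, -, -, -⟩ := hKd
  have hC : fromBlocks A M N 0 + fromRows (-(M * Fd)) (0 : QM r t) * fromCols (0 : QM t q) F +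
      fromRows (0 : QM p u) K * fromCols (-(Kd * N)) (0 : QM u s) =
      fromBlocks A (M * (1 - Fd * F)) ((1 - K * Kd) * N) 0 := by
    rw [fromRows_mul_fromCols, fromRows_mul_fromCols, fromBlocks_add, fromBlocks_add]
    simp [Matrix.mul_add, Matrix.add_mul, Matrix.mul_assoc, sub_eq_add_neg]
  simp only [qrank_eq_finrank_rowSpace]
  rw [← finrank_rowSpace_fromBlocks_add_mul_add_mul _ _ _ (fromRows (-(M * Fd)) 0)
      (fromCols (-(Kd * N)) 0), hC,
    finrank_rowSpace_fromBlocks_fromRows_zero_fromCols_zero A M F N K Fd Kd hF hK]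
  push_cast
  ring
end

section
/- Let B = B0 + B1ε ∈ DQ^{k×l} and C = C0 + C1ε ∈ DQ^{n×l} be dual quaternion matrices. Then the dual quaternion matrix equation YB = C has a solution Y ∈ DQ^{n×k} if and only if r[B0; C0] = r(B0) and r[C1 C0; B0 0; B1 B0] = r[B0 0; B1 B0], where the displayed matrices are block matrices with the indicated quaternion blocks and zero blocks of compatible sizes. -/
open Matrix

/-! Writing `Y = Y0 + Y1 ε`, the equation `Y B = C` splits into `Y0 B0 = C0` and
`Y0 B1 + Y1 B0 = C1`, which together say `[Y1 Y0] [B0 0; B1 B0] = [C1 C0]`. Over a division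
ring, `X A = D` is solvable iff the rows of `D` lie in the row space of `A`, i.e. iff stacking `D`
onto `A` does not raise the rank. The first rank equality is thus implied by the second, as
`Y0 B0 = C0` is part of the block system. -/

open Submodule Module Quaternion TrivSqZeroExt

namespace Matrix

section Semiring

variable {R : Type*} [Semiring R] {m p q : Type*}

theorem span_range_fromRows (A : Matrix p q R) (D : Matrix m q R) :
    span R (Set.range (fromRows A D).row) =
      span R (Set.range A.row) ⊔ span R (Set.range D.row) := by
  rw [← span_union, ← Set.Sum.elim_range]
  rfl

variable [Fintype p]

theorem exists_mul_eq_iff_span_range_le (A : Matrix p q R) (D : Matrix m q R) :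
    (∃ X : Matrix m p R, X * A = D) ↔
      span R (Set.range D.row) ≤ span R (Set.range A.row) := by
  simp only [span_le, Set.range_subset_iff, SetLike.mem_coe, mem_span_range_iff_exists_fun,
    row_def, ← vecMul_eq_sum, Classical.skolem]
  exact exists_congr fun X => ⟨fun h i => by rw [← mul_apply_eq_vecMul, h],
    fun h => funext fun i => (mul_apply_eq_vecMul X A i).trans (h i)⟩

theorem exists_mul_fromBlocks_eq_iff (B0 B1 : Matrix p q R) (C0 C1 : Matrix m q R) :
    (∃ W : Matrix m (p ⊕ p) R, W * fromBlocks B0 0 B1 B0 = fromCols C1 C0) ↔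
      ∃ Y0 Y1 : Matrix m p R, Y0 * B0 = C0 ∧ Y0 * B1 + Y1 * B0 = C1 := by
  have hcols (Y0 Y1 : Matrix m p R) :
      fromCols Y1 Y0 * fromBlocks B0 0 B1 B0 = fromCols C1 C0 ↔
        Y0 * B0 = C0 ∧ Y0 * B1 + Y1 * B0 = C1 := by
    rw [fromCols_mul_fromBlocks, fromCols_ext_iff, Matrix.mul_zero, zero_add, add_comm, and_comm]
  constructor
  · rintro ⟨W, hW⟩
    rw [← fromCols_toCols W, hcols] at hW
    exact ⟨_, _, hW⟩
  · rintro ⟨Y0, Y1, h⟩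
    exact ⟨_, (hcols Y0 Y1).2 h⟩

theorem map_fst_mul (Y : Matrix m p (DualNumber R)) (B : Matrix p q (DualNumber R)) :
    (Y * B).map fst = Y.map fst * B.map fst :=
  Matrix.map_mul (f := fstHom ℕ R R)

theorem map_snd_mul (Y : Matrix m p (DualNumber R)) (B : Matrix p q (DualNumber R)) :
    (Y * B).map snd = Y.map fst * B.map snd + Y.map snd * B.map fst := by
  ext i j
  simp [mul_apply, snd_sum, Finset.sum_add_distrib]

end Semiring

theorem finrank_span_range_fromRows_eq_iff {K : Type*} [DivisionRing K] {m p q : Type*}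
    [Finite m] [Finite p] (A : Matrix p q K) (D : Matrix m q K) :
    finrank K (span K (Set.range (fromRows A D).row)) = finrank K (span K (Set.range A.row)) ↔
      span K (Set.range D.row) ≤ span K (Set.range A.row) := by
  have : FiniteDimensional K ↥(span K (Set.range A.row) ⊔ span K (Set.range D.row)) := by
    rw [← span_range_fromRows]
    exact .span_of_finite K (Set.finite_range _)
  rw [span_range_fromRows, ← sup_eq_left]
  exact ⟨fun h => (eq_of_le_of_finrank_eq le_sup_left h.symm).symm, fun h => by rw [h]⟩

end Matrix

section Quaternion

variable {m p q : Type*}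

theorem qrank_eq_finrank_span_range (A : Matrix m q ℍ) :
    qrank A = finrank ℍ (span ℍ (Set.range A.row)) :=
  rfl

theorem qrank_fromRows_comm (A : Matrix p q ℍ) (D : Matrix m q ℍ) :
    qrank (fromRows A D) = qrank (fromRows D A) := by
  rw [qrank_eq_finrank_span_range, qrank_eq_finrank_span_range, span_range_fromRows,
    span_range_fromRows, sup_comm]

theorem qrank_fromRows_eq_qrank_iff [Finite m] [Fintype p]
    (A : Matrix p q ℍ) (D : Matrix m q ℍ) :
    qrank (fromRows A D) = qrank A ↔ ∃ X : Matrix m p ℍ, X * A = D :=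
  (finrank_span_range_fromRows_eq_iff A D).trans (exists_mul_eq_iff_span_range_le A D).symm

theorem dm_eq_iff {p q : ℕ} (M : Matrix (Fin p) (Fin q) (DualNumber ℍ)) (A0 A1 : QM p q) :
    M = dm A0 A1 ↔ M.map fst = A0 ∧ M.map snd = A1 := by
  constructor
  · rintro rfl
    constructor <;> ext <;> simp [dm]
  · rintro ⟨rfl, rfl⟩
    ext : 2 <;> simp [dm]

theorem exists_mul_dm_eq_iff {k l n : ℕ} (B0 B1 : QM k l) (C0 C1 : QM n l) :
    (∃ Y : Matrix (Fin n) (Fin k) (DualNumber ℍ), Y * dm B0 B1 = dm C0 C1) ↔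
      ∃ Y0 Y1 : QM n k, Y0 * B0 = C0 ∧ Y0 * B1 + Y1 * B0 = C1 := by
  have hB := (dm_eq_iff (dm B0 B1) B0 B1).1 rfl
  constructor
  · rintro ⟨Y, hY⟩
    rw [dm_eq_iff, map_fst_mul, map_snd_mul, hB.1, hB.2] at hY
    exact ⟨_, _, hY⟩
  · rintro ⟨Y0, Y1, h⟩
    have hY := (dm_eq_iff (dm Y0 Y1) Y0 Y1).1 rfl
    refine ⟨dm Y0 Y1, ?_⟩
    rwa [dm_eq_iff, map_fst_mul, map_snd_mul, hB.1, hB.2, hY.1, hY.2]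

end Quaternion

/-- solvability of the dual quaternion matrix equation `Y B = C`
in terms of rank equalities. -/
theorem stmt15 {k l n : ℕ}
    (B0 B1 : QM k l) (C0 C1 : QM n l) :
    (∃ Y : Matrix (Fin n) (Fin k) (DualNumber (Quaternion ℝ)),
        Y * dm B0 B1 = dm C0 C1) ↔
      (qrank (fromRows B0 C0) = qrank B0 ∧
       qrank (fromRows (fromCols C1 C0) (fromBlocks B0 0 B1 B0)) =
         qrank (fromBlocks B0 0 B1 B0)) := by
  rw [qrank_fromRows_comm (fromCols C1 C0), qrank_fromRows_eq_qrank_iff,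
    qrank_fromRows_eq_qrank_iff, exists_mul_fromBlocks_eq_iff, exists_mul_dm_eq_iff]
  constructor
  · rintro ⟨Y0, Y1, h⟩
    exact ⟨⟨Y0, h.1⟩, Y0, Y1, h⟩
  · exact And.right
end
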